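/- Let σ₀=I, σ₁=X, σ₂=Y, σ₃=Z be the 2×2 Pauli matrices and let a : Fin 4 → Fin 4 → ℝ with a 0 0 = 0. Set H = Σ_{i,j} a i j • (σ_i ⊗ σ_j), a 4×4 complex matrix (⊗ the Kronecker product). Then H is a symmetric Z-matrix — i.e. every entry of H is real, H is symmetric, and every off-diagonal entry of H is nonpositive — if and only if a 0 2 = a 2 0 = a 1 2 = a 2 1 = a 3 2 = a 2 3 = 0, a 1 1 ≤ −|a 2 2|, a 0 1 ≤ −|a 3 1|, and a 1 0 ≤ −|a 1 3|. -/
import Mathlib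
open Matrix Kronecker
noncomputable def pauli : Fin 4 → Matrix (Fin 2) (Fin 2) ℂ :=
  ![!![1, 0; 0, 1], !![0, 1; 1, 0], !![0, -Complex.I; Complex.I, 0], !![1, 0; 0, -1]]

set_option maxHeartbeats 2000000 in
theorem two_qubit_symmetric_Z_matrix_iff (a : Fin 4 → Fin 4 → ℝ) (ha : a 0 0 = 0)
    (H : Matrix (Fin 2 × Fin 2) (Fin 2 × Fin 2) ℂ)
    (hH : H = ∑ i : Fin 4, ∑ j : Fin 4, (a i j : ℂ) • (pauli i ⊗ₖ pauli j)) :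
    ((∀ k l, (H k l).im = 0) ∧ Hᵀ = H ∧ (∀ k l, k ≠ l → (H k l).re ≤ 0)) ↔
      (a 0 2 = 0 ∧ a 2 0 = 0 ∧ a 1 2 = 0 ∧ a 2 1 = 0 ∧ a 3 2 = 0 ∧ a 2 3 = 0 ∧
        a 1 1 ≤ -|a 2 2| ∧ a 0 1 ≤ -|a 3 1| ∧ a 1 0 ≤ -|a 1 3|) := by
  subst hH
  constructor
  · rintro ⟨him, hsym, hre⟩
    have e1 := him (0,0) (0,1)
    have e2 := him (1,0) (1,1)
    have e3 := him (0,0) (1,0)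
    have e4 := him (0,1) (1,1)
    have e5 := him (0,0) (1,1)
    have e6 := him (0,1) (1,0)
    have f1 := hre (0,0) (0,1) (by decide)
    have f2 := hre (1,0) (1,1) (by decide)
    have f3 := hre (0,0) (1,0) (by decide)
    have f4 := hre (0,1) (1,1) (by decide)
    have f5 := hre (0,0) (1,1) (by decide)
    have f6 := hre (0,1) (1,0) (by decide)
    simp [Fin.sum_univ_four, pauli, Matrix.sum_apply] at e1 e2 e3 e4 e5 e6 f1 f2 f3 f4 f5 f6
    refine ⟨by linarith, by linarith, by linarith, by linarith, by linarith, by linarith,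
      le_neg.mpr (abs_le.mpr ⟨by linarith, by linarith⟩),
      le_neg.mpr (abs_le.mpr ⟨by linarith, by linarith⟩),
      le_neg.mpr (abs_le.mpr ⟨by linarith, by linarith⟩)⟩
  · rintro ⟨h1, h2, h3, h4, h5, h6, h7, h8, h9⟩
    obtain ⟨g1, g2⟩ := abs_le.mp (le_neg.mp h7)
    obtain ⟨g3, g4⟩ := abs_le.mp (le_neg.mp h8)
    obtain ⟨g5, g6⟩ := abs_le.mp (le_neg.mp h9)
    refine ⟨?_, ?_, ?_⟩
    · rintro ⟨k1, k2⟩ ⟨l1, l2⟩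
      fin_cases k1 <;> fin_cases k2 <;> fin_cases l1 <;> fin_cases l2 <;>
        simp [Fin.sum_univ_four, pauli, Matrix.sum_apply, h1, h2, h3, h4, h5, h6]
    · ext ⟨k1, k2⟩ ⟨l1, l2⟩
      fin_cases k1 <;> fin_cases k2 <;> fin_cases l1 <;> fin_cases l2 <;>
        simp [Fin.sum_univ_four, pauli, Matrix.sum_apply, h1, h2, h3, h4, h5, h6]
    · rintro ⟨k1, k2⟩ ⟨l1, l2⟩ hne
      fin_cases k1 <;> fin_cases k2 <;> fin_cases l1 <;> fin_cases l2 <;>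
        first
          | exact absurd rfl hne
          | (simp [Fin.sum_univ_four, pauli, Matrix.sum_apply, h1, h2, h3, h4, h5, h6, ha];
             linarith)
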